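/- arXiv:1703.01850 — 3 statements merged into one kernel-verified Lean document; each statement's English description precedes it below -/
import Mathlib

section
/- Let X ⊂ P⁴(ℂ) be the set of points [z₁:…:z₅] such that for every choice of three indices {i,j,k} ⊂ {1,…,5} one has max(|z_i|,|z_j|,|z_k|) = max(|z₁|,…,|z₅|); equivalently X is the union over triples {i,j,k} of the faces X_{i,j,k} = { z : |z_i| = |z_j| = |z_k| = max_m |z_m| }. Then X contains no nonconstant entire curve: every holomorphic map f : ℂ → P⁴(ℂ) with f(ℂ) ⊂ X is constant. -/
/- Hyperbolicity of the polyhedron `X ⊆ P⁴(ℂ)`.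

`P⁴(ℂ)` is `Projectivization ℂ (Fin 5 → ℂ)`, where `Fin 5 → ℂ` carries the sup norm,
so that `‖v‖ = max i, |v i|`.  The polyhedron `X` consists of the points
`[z₁ : … : z₅]` such that for every three indices `i, j, k`,
`max (|z i|, |z j|, |z k|) = ‖z‖`; the condition is scale invariant, so it can be
tested on the chosen representative `(f z).rep`.  Holomorphy of maps to projective
space is via local nonvanishing holomorphic lifts (`HoloToProj`). -/

open Metric Filter
open scoped Manifold Topology

noncomputable section

/-- A map from `ℂ` to a projective space is holomorphic if it locally admits nonvanishing
holomorphic lifts. -/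
def HoloToProj {m : ℕ} (f : ℂ → Projectivization ℂ (Fin m → ℂ)) : Prop :=
  ∀ z₀ : ℂ, ∃ W : Set ℂ, IsOpen W ∧ z₀ ∈ W ∧ ∃ F : ℂ → (Fin m → ℂ),
    DifferentiableOn ℂ F W ∧ ∀ z ∈ W, ∃ h : F z ≠ 0, f z = Projectivization.mk ℂ (F z) h


lemma fin5_meet : ∀ i j k a b c : Fin 5, i≠j → i≠k → j≠k → a≠b → a≠c → b≠c →
    (a=i ∨ a=j ∨ a=k ∨ b=i ∨ b=j ∨ b=k ∨ c=i ∨ c=j ∨ c=k) := by decide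

lemma exists_triple_att (r : Fin 5 → ℂ)
    (h : ∀ i j k : Fin 5, i ≠ j → i ≠ k → j ≠ k →
      max (max ‖r i‖ ‖r j‖) ‖r k‖ = ‖r‖) :
    ∃ i j k : Fin 5, i ≠ j ∧ i ≠ k ∧ j ≠ k ∧ ‖r i‖ = ‖r‖ ∧ ‖r j‖ = ‖r‖ ∧ ‖r k‖ = ‖r‖ := by
  classical
  set T : Finset (Fin 5) := Finset.univ.filter (fun i => ‖r i‖ = ‖r‖) with hT
  have key : ∀ a b c : Fin 5, a ≠ b → a ≠ c → b ≠ c → a ∈ T ∨ b ∈ T ∨ c ∈ T := by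
    intro a b c hab hac hbc
    have := h a b c hab hac hbc
    simp only [hT, Finset.mem_filter, Finset.mem_univ, true_and]
    rcases max_choice (max ‖r a‖ ‖r b‖) ‖r c‖ with h1 | h1
    · rcases max_choice ‖r a‖ ‖r b‖ with h2 | h2
      · left; rw [← this, h1, h2]
      · right; left; rw [← this, h1, h2]
    · right; right; rw [← this, h1]
  have hcard : 3 ≤ T.card := by
    by_contra hlt
    push_neg at hlt
    have hc : 3 ≤ Tᶜ.card := by
      have h5 := Finset.card_compl T (α := Fin 5)
      simp only [Fintype.card_fin] at h5
      omega
    obtain ⟨s, hs, hs3⟩ := Finset.exists_subset_card_eq hc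
    obtain ⟨a, b, c, hab, hac, hbc, rfl⟩ := Finset.card_eq_three.1 hs3
    have ha : a ∈ Tᶜ := hs (by simp)
    have hb : b ∈ Tᶜ := hs (by simp)
    have hcc : c ∈ Tᶜ := hs (by simp)
    rw [Finset.mem_compl] at ha hb hcc
    rcases key a b c hab hac hbc with h | h | h <;> tauto
  obtain ⟨s, hs, hs3⟩ := Finset.exists_subset_card_eq hcard
  obtain ⟨a, b, c, hab, hac, hbc, rfl⟩ := Finset.card_eq_three.1 hs3
  have ha := hs (show a ∈ ({a,b,c} : Finset (Fin 5)) by simp)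
  have hb := hs (show b ∈ ({a,b,c} : Finset (Fin 5)) by simp)
  have hc := hs (show c ∈ ({a,b,c} : Finset (Fin 5)) by simp)
  rw [hT, Finset.mem_filter] at ha hb hc
  exact ⟨a, b, c, hab, hac, hbc, ha.2, hb.2, hc.2⟩

lemma rep_eq_smul (f : ℂ → Projectivization ℂ (Fin 5 → ℂ)) (z : ℂ)
    (v : Fin 5 → ℂ) (hv : v ≠ 0) (h : f z = Projectivization.mk ℂ v hv) :
    ∃ a : ℂ, a ≠ 0 ∧ (f z).rep = a • v := by
  have h1 : Projectivization.mk ℂ (f z).rep (f z).rep_nonzero = Projectivization.mk ℂ v hv := by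
    rw [Projectivization.mk_rep]; exact h
  obtain ⟨a, ha⟩ := (Projectivization.mk_eq_mk_iff' ℂ _ _ _ hv).1 h1
  refine ⟨a, ?_, ha.symm⟩
  rintro rfl
  exact (f z).rep_nonzero (by rw [← ha, zero_smul])

lemma att_lift (f : ℂ → Projectivization ℂ (Fin 5 → ℂ)) (z : ℂ)
    (v : Fin 5 → ℂ) (hv : v ≠ 0) (h : f z = Projectivization.mk ℂ v hv) (i : Fin 5) :
    (‖(f z).rep i‖ = ‖(f z).rep‖) ↔ (‖v i‖ = ‖v‖) := by
  obtain ⟨a, ha, hrep⟩ := rep_eq_smul f z v hv h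
  have h1 : ‖(f z).rep i‖ = ‖a‖ * ‖v i‖ := by
    rw [hrep]; simp [norm_smul]
  have h2 : ‖(f z).rep‖ = ‖a‖ * ‖v‖ := by rw [hrep, norm_smul]
  rw [h1, h2]
  have hna : ‖a‖ ≠ 0 := norm_ne_zero_iff.2 ha
  exact ⟨fun hh => mul_left_cancel₀ hna hh, fun hh => by rw [hh]⟩

lemma isClosed_att {f : ℂ → Projectivization ℂ (Fin 5 → ℂ)} (hf : HoloToProj f) (i : Fin 5) :
    IsClosed {z : ℂ | ‖(f z).rep i‖ = ‖(f z).rep‖} := by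
  rw [← isOpen_compl_iff, isOpen_iff_forall_mem_open]
  intro z₀ hz₀
  obtain ⟨W, hWo, hz₀W, F, hFd, hFl⟩ := hf z₀
  have hFc : ContinuousOn F W := hFd.continuousOn
  have hgi : ContinuousOn (fun z => ‖F z‖ - ‖F z i‖) W :=
    hFc.norm.sub ((continuous_apply i).comp_continuousOn hFc).norm
  refine ⟨W ∩ (fun z => ‖F z‖ - ‖F z i‖) ⁻¹' Set.Ioi 0, ?_,
    hgi.isOpen_inter_preimage hWo isOpen_Ioi, ⟨hz₀W, ?_⟩⟩
  · rintro z ⟨hzW, hz⟩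
    obtain ⟨hFz, hfz⟩ := hFl z hzW
    simp only [Set.mem_compl_iff, Set.mem_setOf_eq]
    rw [att_lift f z (F z) hFz hfz i]
    simp only [Set.mem_preimage, Set.mem_Ioi] at hz
    intro h; linarith [h]
  · obtain ⟨hFz, hfz⟩ := hFl z₀ hz₀W
    simp only [Set.mem_compl_iff, Set.mem_setOf_eq] at hz₀
    rw [att_lift f z₀ (F z₀) hFz hfz i] at hz₀
    have hle : ‖F z₀ i‖ ≤ ‖F z₀‖ := norm_le_pi_norm (F z₀) i
    simp only [Set.mem_preimage, Set.mem_Ioi]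
    rcases lt_or_eq_of_le hle with h | h
    · linarith
    · exact absurd h hz₀

/-- The polyhedron `X = ⋂_{i,j,k} ( max (|z_i|,|z_j|,|z_k|) = ‖z‖ )` in `P⁴(ℂ)` contains
no entire curve: every holomorphic map `f : ℂ → P⁴(ℂ)` with image contained in `X` is
constant. -/
theorem polyhedron_contains_no_entire_curve
    (f : ℂ → Projectivization ℂ (Fin 5 → ℂ)) (hf : HoloToProj f)
    (hX : ∀ (z : ℂ) (i j k : Fin 5), i ≠ j → i ≠ k → j ≠ k →
      max (max ‖(f z).rep i‖ ‖(f z).rep j‖) ‖(f z).rep k‖ = ‖(f z).rep‖) :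
    ∀ z w : ℂ, f z = f w := by
  classical
  -- the set where coordinate `i` attains the sup norm
  set C : Fin 5 → Set ℂ := fun i => {z : ℂ | ‖(f z).rep i‖ = ‖(f z).rep‖} with hC
  set A : Fin 5 × Fin 5 × Fin 5 → Set ℂ := fun t =>
    {z : ℂ | t.1 ≠ t.2.1 ∧ t.1 ≠ t.2.2 ∧ t.2.1 ≠ t.2.2} ∩ (C t.1 ∩ C t.2.1 ∩ C t.2.2) with hA
  have hAclosed : ∀ t, IsClosed (A t) := by
    intro t
    by_cases hd : t.1 ≠ t.2.1 ∧ t.1 ≠ t.2.2 ∧ t.2.1 ≠ t.2.2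
    · have h1 : {z : ℂ | t.1 ≠ t.2.1 ∧ t.1 ≠ t.2.2 ∧ t.2.1 ≠ t.2.2} = Set.univ := by
        ext z; simp [hd.1, hd.2.1, hd.2.2]
      rw [hA]; simp only; rw [h1, Set.univ_inter]
      exact ((isClosed_att hf _).inter (isClosed_att hf _)).inter (isClosed_att hf _)
    · have h1 : {z : ℂ | t.1 ≠ t.2.1 ∧ t.1 ≠ t.2.2 ∧ t.2.1 ≠ t.2.2} = ∅ := by
        ext z; simp only [Set.mem_setOf_eq, Set.mem_empty_iff_false, iff_false]; exact hd
      rw [hA]; simp only; rw [h1, Set.empty_inter]; exact isClosed_empty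
  have hcover : ⋃ t, A t = Set.univ := by
    rw [Set.eq_univ_iff_forall]
    intro z
    obtain ⟨i, j, k, hij, hik, hjk, hi, hj, hk⟩ :=
      exists_triple_att ((f z).rep) (fun i j k a b c => hX z i j k a b c)
    exact Set.mem_iUnion.2 ⟨(i, j, k), ⟨⟨hij, hik, hjk⟩, ⟨⟨hi, hj⟩, hk⟩⟩⟩
  obtain ⟨t, z₁, hz₁⟩ := nonempty_interior_of_iUnion_of_closed hAclosed hcover
  obtain ⟨i, j, k⟩ := t
  -- local lift at z₁, restricted to a ball inside W ∩ interior A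
  obtain ⟨W, hWo, hz₁W, F, hFd, hFl⟩ := hf z₁
  obtain ⟨ε, hε, hball⟩ := Metric.isOpen_iff.1 (hWo.inter isOpen_interior) z₁ ⟨hz₁W, hz₁⟩
  set B := ball z₁ ε with hB
  have hz₁B : z₁ ∈ B := mem_ball_self hε
  have hBW : ∀ z ∈ B, z ∈ W := fun z hz => (hball hz).1
  have hBA : ∀ z ∈ B, z ∈ A (i, j, k) := fun z hz => interior_subset (hball hz).2
  have hdist : i ≠ j ∧ i ≠ k ∧ j ≠ k := (hBA z₁ hz₁B).1
  have hatt : ∀ z ∈ B, ‖F z i‖ = ‖F z‖ ∧ ‖F z j‖ = ‖F z‖ ∧ ‖F z k‖ = ‖F z‖ := by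
    intro z hz
    obtain ⟨hFz, hfz⟩ := hFl z (hBW z hz)
    obtain ⟨_, ⟨⟨hi, hj⟩, hk⟩⟩ := hBA z hz
    exact ⟨(att_lift f z _ hFz hfz i).1 hi, (att_lift f z _ hFz hfz j).1 hj,
      (att_lift f z _ hFz hfz k).1 hk⟩
  have hFj : ∀ z ∈ B, F z j ≠ 0 := by
    intro z hz
    obtain ⟨hFz, _⟩ := hFl z (hBW z hz)
    have h1 := (hatt z hz).2.1
    intro h0
    rw [h0, norm_zero] at h1
    exact hFz (norm_eq_zero.1 h1.symm)
  have hdiffB : ∀ l : Fin 5, DifferentiableOn ℂ (fun z => F z l) B :=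
    fun l => (differentiableOn_pi.1 (hFd.mono hBW)) l
  have ratio : ∀ l : Fin 5, (∀ z ∈ B, ‖F z l‖ = ‖F z‖) →
      ∃ c : ℂ, ‖c‖ = 1 ∧ ∀ z ∈ B, F z l = c * F z j := by
    intro l hl
    set h : ℂ → ℂ := fun z => F z l / F z j with hh
    have hnorm : ∀ z ∈ B, ‖h z‖ = 1 := by
      intro z hz
      rw [hh]; simp only [norm_div]
      rw [hl z hz, (hatt z hz).2.1]
      obtain ⟨hFz, _⟩ := hFl z (hBW z hz)
      exact div_self (norm_ne_zero_iff.2 hFz)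
    have hdh : DifferentiableOn ℂ h B := (hdiffB l).div (hdiffB j) hFj
    have hmax : IsMaxOn (norm ∘ h) B z₁ := by
      intro z hz
      simp only [Function.comp_apply, Set.mem_setOf_eq]
      rw [hnorm z hz, hnorm z₁ hz₁B]
    have heq := Complex.eqOn_of_isPreconnected_of_isMaxOn_norm
      (convex_ball z₁ ε).isPreconnected isOpen_ball hdh hz₁B hmax
    refine ⟨h z₁, hnorm z₁ hz₁B, ?_⟩
    intro z hz
    have hzv := heq hz
    simp only [Function.const_apply] at hzv
    calc F z l = (F z l / F z j) * F z j := (div_mul_cancel₀ _ (hFj z hz)).symm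
    _ = h z₁ * F z j := by rw [← hzv]
  obtain ⟨c, hc1, hcF⟩ := ratio i (fun z hz => (hatt z hz).1)
  obtain ⟨c', hc'1, hc'F⟩ := ratio k (fun z hz => (hatt z hz).2.2)
  -- globalize the relations by a clopen argument
  set R : ℂ → Prop := fun w => ∃ v : Fin 5 → ℂ, ∃ hv : v ≠ 0,
    f w = Projectivization.mk ℂ v hv ∧ v i = c * v j ∧ v k = c' * v j with hR
  set G : Set ℂ := {z | ∀ᶠ w in 𝓝 z, R w} with hG
  have hGopen : IsOpen G := isOpen_setOf_eventually_nhds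
  have hz₁G : z₁ ∈ G := by
    rw [hG, Set.mem_setOf_eq]
    filter_upwards [isOpen_ball.mem_nhds hz₁B] with w hw
    obtain ⟨hFw, hfw⟩ := hFl w (hBW w hw)
    exact ⟨F w, hFw, hfw, hcF w hw, hc'F w hw⟩
  have hGclosed : IsClosed G := by
    apply isClosed_of_closure_subset
    intro z hz
    obtain ⟨W', hW'o, hzW', F', hF'd, hF'l⟩ := hf z
    obtain ⟨δ, hδ, hballδ⟩ := Metric.isOpen_iff.1 hW'o z hzW'
    obtain ⟨z', hz'B, hz'G⟩ :=
      mem_closure_iff_nhds.1 hz (ball z δ) (isOpen_ball.mem_nhds (mem_ball_self hδ))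
    set φ : ℂ → ℂ := fun w => F' w i - c * F' w j with hφ
    set ψ : ℂ → ℂ := fun w => F' w k - c' * F' w j with hψ
    have hBW' : ∀ w ∈ ball z δ, w ∈ W' := fun w hw => hballδ hw
    have hdiffB' : ∀ l : Fin 5, DifferentiableOn ℂ (fun w => F' w l) (ball z δ) :=
      fun l => (differentiableOn_pi.1 (hF'd.mono hBW')) l
    have hφd : DifferentiableOn ℂ φ (ball z δ) := (hdiffB' i).sub ((hdiffB' j).const_mul c)
    have hψd : DifferentiableOn ℂ ψ (ball z δ) := (hdiffB' k).sub ((hdiffB' j).const_mul c')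
    have hRloc : ∀ w, R w → w ∈ ball z δ → φ w = 0 ∧ ψ w = 0 := by
      intro w hRw hwB
      obtain ⟨v, hv, hfv, hvi, hvk⟩ := hRw
      obtain ⟨hFw, hfw⟩ := hF'l w (hBW' w hwB)
      have hmk : Projectivization.mk ℂ (F' w) hFw = Projectivization.mk ℂ v hv := by
        rw [← hfw, hfv]
      obtain ⟨a, ha⟩ := (Projectivization.mk_eq_mk_iff' ℂ _ _ hFw hv).1 hmk
      have hFi : F' w i = a * v i := by rw [← ha]; simp
      have hFj' : F' w j = a * v j := by rw [← ha]; simp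
      have hFk : F' w k = a * v k := by rw [← ha]; simp
      constructor
      · rw [hφ]; simp only; rw [hFi, hFj', hvi]; ring
      · rw [hψ]; simp only; rw [hFk, hFj', hvk]; ring
    have hev : ∀ᶠ w in 𝓝 z', R w := hz'G
    have hevB : ball z δ ∈ 𝓝 z' := isOpen_ball.mem_nhds hz'B
    have hφ0 : Set.EqOn φ 0 (ball z δ) := by
      apply (hφd.analyticOnNhd isOpen_ball).eqOn_zero_of_preconnected_of_eventuallyEq_zero
        (convex_ball z δ).isPreconnected hz'B
      filter_upwards [hev, hevB] with w h1 h2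
      exact (hRloc w h1 h2).1
    have hψ0 : Set.EqOn ψ 0 (ball z δ) := by
      apply (hψd.analyticOnNhd isOpen_ball).eqOn_zero_of_preconnected_of_eventuallyEq_zero
        (convex_ball z δ).isPreconnected hz'B
      filter_upwards [hev, hevB] with w h1 h2
      exact (hRloc w h1 h2).2
    rw [hG, Set.mem_setOf_eq]
    filter_upwards [isOpen_ball.mem_nhds (mem_ball_self hδ)] with w hw
    obtain ⟨hFw, hfw⟩ := hF'l w (hBW' w hw)
    refine ⟨F' w, hFw, hfw, ?_, ?_⟩
    · have h0 := hφ0 hw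
      simp only [hφ, Pi.zero_apply] at h0
      exact sub_eq_zero.1 h0
    · have h0 := hψ0 hw
      simp only [hψ, Pi.zero_apply] at h0
      exact sub_eq_zero.1 h0
  have hGuniv : G = Set.univ := (IsClopen.eq_univ ⟨hGclosed, hGopen⟩ ⟨z₁, hz₁G⟩)
  -- coordinate j attains the norm everywhere
  have hAttj : ∀ z (v : Fin 5 → ℂ) (hv : v ≠ 0), f z = Projectivization.mk ℂ v hv →
      ‖v j‖ = ‖v‖ := by
    intro z v hv hfv
    have hRz : R z := by
      have hzG : z ∈ G := hGuniv ▸ Set.mem_univ z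
      exact (hzG : ∀ᶠ w in 𝓝 z, R w).self_of_nhds
    obtain ⟨u, hu, hfu, hui, huk⟩ := hRz
    have hui' : ‖u i‖ = ‖u j‖ := by rw [hui, norm_mul, hc1, one_mul]
    have huk' : ‖u k‖ = ‖u j‖ := by rw [huk, norm_mul, hc'1, one_mul]
    obtain ⟨a, b, cc, hab, hac, hbc, ha, hb, hcc⟩ :=
      exists_triple_att ((f z).rep) (fun p q r h1 h2 h3 => hX z p q r h1 h2 h3)
    have key : ∀ m : Fin 5, ‖(f z).rep m‖ = ‖(f z).rep‖ → (m = i ∨ m = j ∨ m = k) →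
        ‖u j‖ = ‖u‖ := by
      intro m hm hmc
      have hum : ‖u m‖ = ‖u‖ := (att_lift f z u hu hfu m).1 hm
      rcases hmc with rfl | rfl | rfl
      · rw [← hui']; exact hum
      · exact hum
      · rw [← huk']; exact hum
    have huj : ‖u j‖ = ‖u‖ := by
      rcases fin5_meet i j k a b cc hdist.1 hdist.2.1 hdist.2.2 hab hac hbc with
        h | h | h | h | h | h | h | h | h
      · exact key a ha (Or.inl h)
      · exact key a ha (Or.inr (Or.inl h))
      · exact key a ha (Or.inr (Or.inr h))
      · exact key b hb (Or.inl h)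
      · exact key b hb (Or.inr (Or.inl h))
      · exact key b hb (Or.inr (Or.inr h))
      · exact key cc hcc (Or.inl h)
      · exact key cc hcc (Or.inr (Or.inl h))
      · exact key cc hcc (Or.inr (Or.inr h))
    exact (att_lift f z v hv hfv j).1 ((att_lift f z u hu hfu j).2 huj)
  have hrepj : ∀ z : ℂ, (f z).rep j ≠ 0 := by
    intro z h0
    have h1 := hAttj z (f z).rep (f z).rep_nonzero (Projectivization.mk_rep (f z)).symm
    rw [h0, norm_zero] at h1
    exact (f z).rep_nonzero (norm_eq_zero.1 h1.symm)
  -- the coordinate ratios are entire and bounded, hence constant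
  set g : Fin 5 → ℂ → ℂ := fun l z => (f z).rep l / (f z).rep j with hg
  have hgd : ∀ l, Differentiable ℂ (g l) := by
    intro l z₀
    obtain ⟨W₀, hW₀o, hzW₀, F₀, hF₀d, hF₀l⟩ := hf z₀
    have heq : Set.EqOn (g l) (fun z => F₀ z l / F₀ z j) W₀ := by
      intro z hz
      obtain ⟨hFz, hfz⟩ := hF₀l z hz
      obtain ⟨a, ha, hrep⟩ := rep_eq_smul f z (F₀ z) hFz hfz
      simp only [hg]
      rw [hrep]
      simp only [Pi.smul_apply, smul_eq_mul]
      exact mul_div_mul_left _ _ ha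
    have hFj' : ∀ z ∈ W₀, F₀ z j ≠ 0 := by
      intro z hz h0
      obtain ⟨hFz, hfz⟩ := hF₀l z hz
      have h1 := hAttj z (F₀ z) hFz hfz
      rw [h0, norm_zero] at h1
      exact hFz (norm_eq_zero.1 h1.symm)
    have hd : DifferentiableOn ℂ (fun z => F₀ z l / F₀ z j) W₀ :=
      ((differentiableOn_pi.1 hF₀d) l).div ((differentiableOn_pi.1 hF₀d) j) hFj'
    have hdat : DifferentiableAt ℂ (fun z => F₀ z l / F₀ z j) z₀ :=
      hd.differentiableAt (hW₀o.mem_nhds hzW₀)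
    exact hdat.congr_of_eventuallyEq (eventuallyEq_of_mem (hW₀o.mem_nhds hzW₀) heq)
  have hgb : ∀ l z, ‖g l z‖ ≤ 1 := by
    intro l z
    have hj := hAttj z (f z).rep (f z).rep_nonzero (Projectivization.mk_rep (f z)).symm
    simp only [hg, norm_div]
    rw [hj]
    exact div_le_one_of_le₀ (norm_le_pi_norm _ l) (norm_nonneg _)
  have hgc : ∀ l (z w : ℂ), g l z = g l w := by
    intro l z w
    apply (hgd l).apply_eq_apply_of_bounded
    apply Bornology.IsBounded.subset (Metric.isBounded_closedBall (x := (0:ℂ)) (r := 1))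
    rintro _ ⟨z, rfl⟩
    simpa [Metric.mem_closedBall, dist_zero_right] using hgb l z
  -- conclude
  intro z w
  have hvz := hrepj z
  have hvw := hrepj w
  have hsc : ((f z).rep j / (f w).rep j) • (f w).rep = (f z).rep := by
    funext l
    have h1 : (f z).rep l / (f z).rep j = (f w).rep l / (f w).rep j := hgc l z w
    simp only [Pi.smul_apply, smul_eq_mul]
    field_simp at h1 ⊢
    linear_combination -h1
  have hmk : Projectivization.mk ℂ (f z).rep (f z).rep_nonzero =
      Projectivization.mk ℂ (f w).rep (f w).rep_nonzero :=
    (Projectivization.mk_eq_mk_iff' ℂ _ _ _ _).2 ⟨_, hsc⟩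
  rw [Projectivization.mk_rep, Projectivization.mk_rep] at hmk
  exact hmk
end
end

section
/- Let h be a holomorphic function on an open set U ⊂ ℂ containing a point z, let f_n, f : U → ℂ^m be holomorphic with f_n → f locally uniformly, and suppose h ∘ f is not identically zero near z but h(f(z)) = 0. Then for every sufficiently small neighbourhood V of z, the function h ∘ f_n has a zero in V for all large n. -/
/- The Rouché/Hurwitz argument underlying stability of intersections.

`h` is a holomorphic function on an open set `W ⊆ ℂ^m` (with `ℂ^m = Fin m → ℂ`)
containing `F z`, and `f n, F : U → ℂ^m` are holomorphic on an open set `U ⊆ ℂ`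
containing `z`, with `f n → F` locally uniformly on `U`.  If `h ∘ F` is not identically
zero near `z` but `h (F z) = 0`, then for every sufficiently small neighbourhood `V` of
`z` the function `h ∘ f n` has a zero in `V` for all large `n`. -/

open Metric Filter
open scoped Topology

noncomputable section

theorem zeros_are_stable
    {m : ℕ}
    (U : Set ℂ) (hU : IsOpen U) (z : ℂ) (hz : z ∈ U)
    (W : Set (Fin m → ℂ)) (hW : IsOpen W)
    (h : (Fin m → ℂ) → ℂ) (hh : DifferentiableOn ℂ h W)
    (f : ℕ → ℂ → (Fin m → ℂ)) (F : ℂ → (Fin m → ℂ))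
    (hf : ∀ n, DifferentiableOn ℂ (f n) U)
    (hF : DifferentiableOn ℂ F U)
    (hFz : F z ∈ W)
    (hconv : TendstoLocallyUniformlyOn f F atTop U)
    (hnz : ¬ ∀ᶠ w in 𝓝 z, h (F w) = 0)
    (hzero : h (F z) = 0) :
    ∃ V₀ ∈ 𝓝 z, ∀ V ∈ 𝓝 z, V ⊆ V₀ →
      ∀ᶠ n in atTop, ∃ w ∈ V, h (f n w) = 0 := by
  classical
  set g : ℂ → ℂ := fun w => h (F w) with hg_def
  set U' : Set ℂ := U ∩ F ⁻¹' W with hU'_def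
  have hU'open : IsOpen U' := hF.continuousOn.isOpen_inter_preimage hU hW
  have hzU' : z ∈ U' := ⟨hz, hFz⟩
  have hU'nhds : U' ∈ 𝓝 z := hU'open.mem_nhds hzU'
  have hgdiff : DifferentiableOn ℂ g U' := by
    apply hh.comp (hF.mono Set.inter_subset_left)
    exact fun x hx => hx.2
  have hga : AnalyticAt ℂ g z := hgdiff.analyticAt hU'nhds
  have hne : ∀ᶠ w in 𝓝[≠] z, g w ≠ 0 := by
    rcases hga.eventually_eq_zero_or_eventually_ne_zero with h1 | h2
    · exact absurd h1 hnz
    · exact h2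
  rw [eventually_nhdsWithin_iff] at hne
  -- find a closed ball on which `g` has no zero except `z`, inside `U'`
  obtain ⟨r₀, hr₀, hball⟩ :=
    (Metric.nhds_basis_closedBall.eventually_iff).mp (hne.and (eventually_mem_nhds_iff.mpr hU'nhds))
  refine ⟨ball z r₀, ball_mem_nhds z hr₀, ?_⟩
  intro V hV hVsub
  obtain ⟨r, hr, hrV⟩ := (Metric.nhds_basis_closedBall.mem_iff).mp hV
  have hKball : closedBall z r ⊆ ball z r₀ := hrV.trans hVsub
  have hKU' : closedBall z r ⊆ U' := fun w hw =>
    mem_of_mem_nhds (hball (ball_subset_closedBall (hKball hw))).2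
  have hKU : closedBall z r ⊆ U := fun w hw => (hKU' hw).1
  -- `g` does not vanish on the sphere of radius `r`
  have hsphere_ne : ∀ w ∈ sphere z r, g w ≠ 0 := by
    intro w hw
    have hwz : w ≠ z := by
      intro hwz
      rw [mem_sphere, hwz, dist_self] at hw
      exact hr.ne' hw.symm
    exact (hball (ball_subset_closedBall (hKball (sphere_subset_closedBall hw)))).1 hwz
  -- minimum of `‖g‖` on the sphere
  have hgc : ContinuousOn g (closedBall z r) := hgdiff.continuousOn.mono hKU'
  obtain ⟨w₀, hw₀, hmin⟩ := (isCompact_sphere z r).exists_isMinOn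
    (NormedSpace.sphere_nonempty.mpr hr.le)
    (continuous_norm.comp_continuousOn (hgc.mono sphere_subset_closedBall))
  set ε : ℝ := ‖g w₀‖ with hε_def
  have hε : 0 < ε := norm_pos_iff.mpr (hsphere_ne w₀ hw₀)
  -- compact thickening of `F '' closedBall z r` inside `W`
  have hFK : IsCompact (F '' closedBall z r) :=
    (isCompact_closedBall z r).image_of_continuousOn (hF.continuousOn.mono hKU)
  have hFKW : F '' closedBall z r ⊆ W := by
    rintro _ ⟨w, hw, rfl⟩; exact (hKU' hw).2
  obtain ⟨δ, hδ, hδW⟩ := hFK.exists_cthickening_subset_open hW hFKW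
  have hK'comp : IsCompact (cthickening δ (F '' closedBall z r)) := hFK.cthickening
  -- uniform continuity of `h` on the thickening
  have huc : UniformContinuousOn h (cthickening δ (F '' closedBall z r)) :=
    hK'comp.uniformContinuousOn_of_continuous (hh.continuousOn.mono hδW)
  obtain ⟨δ', hδ', hδ'h⟩ := (Metric.uniformContinuousOn_iff.mp huc) (ε / 2) (by positivity)
  -- uniform convergence on the closed ball
  have hTU : TendstoUniformlyOn f F atTop (closedBall z r) :=
    (tendstoLocallyUniformlyOn_iff_forall_isCompact hU).mp hconv
      (closedBall z r) hKU (isCompact_closedBall z r)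
  have hev : ∀ᶠ n in atTop, ∀ x ∈ closedBall z r, dist (F x) (f n x) < min δ δ' :=
    (Metric.tendstoUniformlyOn_iff.mp hTU) (min δ δ') (lt_min hδ hδ')
  filter_upwards [hev] with n hn
  -- `f n` maps the ball into the thickening
  have hmemK' : ∀ x ∈ closedBall z r, f n x ∈ cthickening δ (F '' closedBall z r) := by
    intro x hx
    refine mem_cthickening_of_dist_le (f n x) (F x) δ _ ⟨x, hx, rfl⟩ ?_
    rw [dist_comm]
    exact ((hn x hx).trans_le (min_le_left _ _)).le
  have hFmemK' : ∀ x ∈ closedBall z r,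
      F x ∈ cthickening δ (F '' closedBall z r) := fun x hx =>
    self_subset_cthickening _ ⟨x, hx, rfl⟩
  -- `h ∘ f n` is uniformly `ε/2`-close to `g` on the closed ball
  have hclose : ∀ x ∈ closedBall z r, dist (h (f n x)) (g x) < ε / 2 := by
    intro x hx
    refine hδ'h _ (hmemK' x hx) _ (hFmemK' x hx) ?_
    rw [dist_comm]
    exact (hn x hx).trans_le (min_le_right _ _)
  by_contra hcon
  push_neg at hcon
  have hne0 : ∀ x ∈ closedBall z r, h (f n x) ≠ 0 := by
    intro x hx h0
    exact hcon x (hrV hx) h0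
  -- `h ∘ f n` is differentiable on a neighbourhood of the closed ball
  have hOopen : IsOpen (U ∩ (f n) ⁻¹' W) :=
    (hf n).continuousOn.isOpen_inter_preimage hU hW
  have hgn : DifferentiableOn ℂ (fun w => h (f n w)) (U ∩ (f n) ⁻¹' W) := by
    apply hh.comp ((hf n).mono Set.inter_subset_left)
    exact fun x hx => hx.2
  have hKO : closedBall z r ⊆ U ∩ (f n) ⁻¹' W := fun x hx =>
    ⟨hKU hx, hδW (hmemK' x hx)⟩
  have hgnK : DifferentiableOn ℂ (fun w => h (f n w)) (ball z r) :=
    hgn.mono ((ball_subset_closedBall).trans hKO)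
  -- the inverse function
  have hqdiff : DiffContOnCl ℂ (fun w => (h (f n w))⁻¹) (ball z r) := by
    constructor
    · exact hgnK.inv (fun x hx => hne0 x (ball_subset_closedBall hx))
    · rw [closure_ball z hr.ne']
      exact ((hgn.continuousOn.mono hKO).inv₀ hne0)
  -- on the sphere, `‖h (f n x)‖ ≥ ε / 2`
  have hlb : ∀ x ∈ sphere z r, ε / 2 ≤ ‖h (f n x)‖ := by
    intro x hx
    have h1 : ε ≤ ‖g x‖ := hmin hx
    have h2 : dist (h (f n x)) (g x) < ε / 2 :=
      hclose x (sphere_subset_closedBall hx)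
    have h3 : ‖g x‖ - ‖h (f n x)‖ ≤ dist (h (f n x)) (g x) := by
      rw [dist_comm, dist_eq_norm]
      exact norm_sub_norm_le _ _
    linarith
  -- maximum modulus for the inverse
  have hmax : ‖(h (f n z))⁻¹‖ ≤ (ε / 2)⁻¹ := by
    apply Complex.norm_le_of_forall_mem_frontier_norm_le isBounded_ball hqdiff
    · intro x hx
      rw [frontier_ball z hr.ne'] at hx
      rw [norm_inv]
      exact (inv_le_inv₀ (lt_of_lt_of_le (by positivity) (hlb x hx)) (by positivity)).mpr (hlb x hx)
    · rw [closure_ball z hr.ne']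
      exact mem_closedBall_self hr.le
  have hzK : z ∈ closedBall z r := mem_closedBall_self hr.le
  have hnz0 : h (f n z) ≠ 0 := hne0 z hzK
  rw [norm_inv] at hmax
  have hge : ε / 2 ≤ ‖h (f n z)‖ :=
    (inv_le_inv₀ (norm_pos_iff.mpr hnz0) (by positivity)).mp hmax
  have hlt : ‖h (f n z)‖ < ε / 2 := by
    have := hclose z hzK
    rw [hg_def] at this
    simp only [hzero, dist_zero_right] at this
    exact this
  linarith
end
end

section
/- (Ahlfors lemma) Let f : ℂ → X be an entire curve in a compact hermitian complex manifold X. For r > 0 let a(r) be the area of f restricted to the disc D_r of radius r and l(r) the length of f restricted to the circle ∂D_r. Then there exists a sequence r_n → +∞ such that l(r_n)/a(r_n) → 0; that is, the rescaled discs f_n : D → X, f_n(z) = f(r_n z), satisfy condition (A): length(f_n(∂D))/area(f_n(D)) → 0. -/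
/- Ahlfors lemma.

`X` is a compact complex manifold modeled on a finite-dimensional complex normed space
`E`, with hermitian area form `ω` (continuous, antisymmetric, `J`-invariant, with
`ω x v (i • v) = ‖v‖² > 0` for `v ≠ 0`).  For an entire curve `f : ℂ → X`,
`cArea ω f r = ∫_{D_r} f*ω` is the area of `f` on the disc of radius `r` and
`cLen ω f r = ∫_{∂D_r} ‖f'‖ ds` the length of the image of the circle of radius `r`.
The conclusion produces radii `r n → ∞` with `l (r n) / a (r n) → 0`; equivalently, the
rescaled discs `z ↦ f (r n • z)` satisfy the Ahlfors condition (A). -/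

open Metric Filter MeasureTheory
open scoped Manifold Topology

noncomputable section

variable {E : Type*} [NormedAddCommGroup E] [NormedSpace ℂ E] [FiniteDimensional ℂ E]
variable {X : Type*} [TopologicalSpace X] [T2Space X] [ChartedSpace E X]

/-- Density of the pullback by `f : ℂ → X` of the 2-form `α` on `X`. -/
def pdFull (α : X → E →L[ℝ] E →L[ℝ] ℝ) (f : ℂ → X) (z : ℂ) : ℝ :=
  α (f z) (mfderiv 𝓘(ℂ) 𝓘(ℂ, E) f z (1 : ℂ)) (mfderiv 𝓘(ℂ) 𝓘(ℂ, E) f z (Complex.I : ℂ))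

/-- The area of the image by `f` of the disc of radius `r`. -/
def cArea (ω : X → E →L[ℝ] E →L[ℝ] ℝ) (f : ℂ → X) (r : ℝ) : ℝ :=
  ∫ z in ball (0 : ℂ) r, pdFull ω f z

/-- The image of the tangent vector to the circle of radius `r` at `r e^{iθ}` under the
derivative of `f`. -/
def cvec (f : ℂ → X) (r θ : ℝ) : E :=
  mfderiv 𝓘(ℂ) 𝓘(ℂ, E) f ((r : ℂ) * Complex.exp ((θ : ℂ) * Complex.I))
    (Complex.I * ((r : ℂ) * Complex.exp ((θ : ℂ) * Complex.I)))

/-- The length of the image by `f` of the circle of radius `r`. -/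
def cLen (ω : X → E →L[ℝ] E →L[ℝ] ℝ) (f : ℂ → X) (r : ℝ) : ℝ :=
  ∫ θ in (0 : ℝ)..(2 * Real.pi),
    Real.sqrt (ω (f ((r : ℂ) * Complex.exp ((θ : ℂ) * Complex.I)))
      (cvec f r θ) (Complex.I • cvec f r θ))

/-! Write `λ² = pdFull ω f`, so that `a(r) = ∫_{D_r} λ²` and `l(r) = ∫ λ r dθ`. On each circle,
Cauchy–Schwarz gives `l(s)² ≤ 2π s · ∫ λ² s dθ`, and integrating over `s ∈ [r₁, r₂)` in polar
coordinates: if `l ≥ K` there, then `a(r₂) ≥ a(r₁) + K²/(2π) · (log r₂ - log r₁)`.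
If we had `l ≥ ε a` for all large `r`, then `t ↦ a(eᵗ)` would satisfy the integrated form of
`y' ≥ (ε²/2π) y²` with `y > 0`, which blows up in finite time; so `l(r)/a(r) < ε` for arbitrarily
large `r`. Where the area vanishes the quotient is `0` by the convention `x / 0 = 0`. -/

open Real Set

theorem sq_integral_sqrt_le {α : Type*} [MeasurableSpace α] {μ : Measure α} [IsFiniteMeasure μ]
    {h : α → ℝ} (h_nonneg : ∀ x, 0 ≤ h x) (h_int : Integrable h μ) :
    (∫ x, √(h x) ∂μ) ^ 2 ≤ μ.real univ * ∫ x, h x ∂μ := by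
  rcases eq_zero_or_neZero μ with rfl | hμ
  · simp
  have h_sqrt_int : Integrable (fun x => √(h x)) μ :=
    ((memLp_two_iff_integrable_sq (continuous_sqrt.comp_aestronglyMeasurable h_int.1)).2
      (h_int.congr (ae_of_all _ fun x => (sq_sqrt (h_nonneg x)).symm))).integrable one_le_two
  have jensen := strictConcaveOn_sqrt.concaveOn.le_map_average continuous_sqrt.continuousOn
    isClosed_Ici (ae_of_all _ h_nonneg) h_int h_sqrt_int
  have hm : 0 < μ.real univ := by
    simp [measureReal_def, ENNReal.toReal_pos_iff, pos_iff_ne_zero, measure_lt_top, NeZero.ne]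
  rw [average_eq, average_eq, smul_eq_mul, smul_eq_mul, inv_mul_le_iff₀ hm] at jensen
  calc (∫ x, √(h x) ∂μ) ^ 2 ≤ (μ.real univ * √((μ.real univ)⁻¹ * ∫ x, h x ∂μ)) ^ 2 :=
        pow_le_pow_left₀ (integral_nonneg fun x => sqrt_nonneg _) jensen 2
    _ = μ.real univ * ∫ x, h x ∂μ := by
        rw [mul_pow, sq_sqrt (mul_nonneg (inv_nonneg.2 hm.le) (integral_nonneg h_nonneg))]
        field_simp

theorem false_of_forall_add_mul_sq_mul_sub_le {B : ℝ → ℝ} {c t₀ : ℝ} (hc : 0 < c)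
    (h₀ : 0 < B t₀)
    (hB : ∀ t₁ t₂, t₀ ≤ t₁ → t₁ ≤ t₂ → B t₁ + c * B t₁ ^ 2 * (t₂ - t₁) ≤ B t₂) : False := by
  have mono : ∀ t₁ t₂, t₀ ≤ t₁ → t₁ ≤ t₂ → B t₁ ≤ B t₂ := fun t₁ t₂ h₁ h₁₂ =>
    le_trans (le_add_of_nonneg_right (by have := sub_nonneg.2 h₁₂; positivity)) (hB t₁ t₂ h₁ h₁₂)
  set T := t₀ + 2 / (c * B t₀)
  -- A step of length `1 / (c B t)` doubles `B`, so `t + 2 / (c B t)` does not increase.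
  set step : ℝ → ℝ := fun t => t + 1 / (c * B t)
  have orbit : ∀ k : ℕ, t₀ ≤ step^[k] t₀ ∧ B t₀ * 2 ^ k ≤ B (step^[k] t₀) ∧
      step^[k] t₀ + 2 / (c * B (step^[k] t₀)) ≤ T := by
    intro k
    induction k with
    | zero => simp [T]
    | succ k ih =>
      obtain ⟨ht, hBt, hT⟩ := ih
      rw [Function.iterate_succ_apply']
      set t := step^[k] t₀
      have hb : 0 < B t := h₀.trans_le (mono t₀ t le_rfl ht)
      have hstep : t ≤ step t := le_add_of_nonneg_right (by positivity)
      have hdouble : 2 * B t ≤ B (step t) := by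
        have := hB t (step t) ht hstep
        rw [show c * B t ^ 2 * (step t - t) = B t by simp only [step]; field_simp; ring] at this
        linarith
      refine ⟨ht.trans hstep, by rw [pow_succ]; linarith, ?_⟩
      calc step t + 2 / (c * B (step t)) ≤ step t + 2 / (c * (2 * B t)) := by gcongr
        _ = t + 2 / (c * B t) := by simp only [step]; field_simp; ring
        _ ≤ T := hT
  obtain ⟨k, hk⟩ := pow_unbounded_of_one_lt (B T / B t₀) one_lt_two
  obtain ⟨ht, hBt, hT⟩ := orbit k
  have hb : 0 < B (step^[k] t₀) := h₀.trans_le (mono _ _ le_rfl ht)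
  have hBT : B (step^[k] t₀) ≤ B T :=
    mono _ _ ht (le_trans (le_add_of_nonneg_right (by positivity)) hT)
  rw [div_lt_iff₀ h₀] at hk
  linarith

theorem exists_seq_tendsto_atTop_of_forall_exists_lt {g : ℝ → ℝ} (hg : ∀ r, 0 ≤ g r)
    (h : ∀ ε > 0, ∀ R, ∃ r ≥ R, g r < ε) :
    ∃ r : ℕ → ℝ, (∀ n, 0 < r n) ∧ Tendsto r atTop atTop ∧
      Tendsto (fun n => g (r n)) atTop (𝓝 0) := by
  choose r hr_ge hr_lt using fun n : ℕ => h (1 / (n + 1)) Nat.one_div_pos_of_nat (n + 1)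
  refine ⟨r, fun n => by linarith [hr_ge n, (n.cast_nonneg : (0 : ℝ) ≤ n)], ?_, ?_⟩
  · exact tendsto_atTop_mono hr_ge (tendsto_atTop_add_const_right _ 1 tendsto_natCast_atTop_atTop)
  · exact squeeze_zero (fun n => hg _) (fun n => (hr_lt n).le)
      tendsto_one_div_add_atTop_nhds_zero_nat

theorem apply_smul_I_smul_of_antisymm {V : Type*} [NormedAddCommGroup V] [NormedSpace ℂ V]
    (B : V →L[ℝ] V →L[ℝ] ℝ) (hB : ∀ v w, B v w = -B w v) (c : ℂ) (v : V) :
    B (c • v) (Complex.I • c • v) = ‖c‖ ^ 2 * B v (Complex.I • v) := by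
  have hc : c • v = c.re • v + c.im • Complex.I • v := by
    rw [← Complex.coe_smul, ← Complex.coe_smul, smul_smul, ← add_smul, Complex.re_add_im]
  have hIc : Complex.I • c • v = c.re • Complex.I • v - c.im • v := by
    rw [hc, smul_add, smul_comm Complex.I c.re, smul_comm Complex.I c.im, smul_smul Complex.I,
      Complex.I_mul_I, neg_one_smul, smul_neg, ← sub_eq_add_neg]
  have hvv : B v v = 0 := by linarith [hB v v]
  have hII : B (Complex.I • v) (Complex.I • v) = 0 := by
    linarith [hB (Complex.I • v) (Complex.I • v)]
  rw [hIc, hc, Complex.sq_norm, Complex.normSq_apply]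
  simp only [map_add, map_sub, map_smul, add_apply, smul_apply, smul_eq_mul, hvv, hII,
    hB (Complex.I • v) v]
  ring

theorem ContinuousLinearMap.apply_eq_smul_apply_one {V : Type*} [NormedAddCommGroup V]
    [NormedSpace ℂ V] (L : ℂ →L[ℂ] V) (c : ℂ) : L c = c • L 1 := by
  rw [← map_smul, smul_eq_mul, mul_one]

section Polar

variable {G : Type*} [NormedAddCommGroup G] [NormedSpace ℝ G]

theorem integrable_iff_integrableOn_polarCoord_symm (f : ℝ × ℝ → G) :
    Integrable f ↔ IntegrableOn (fun p => p.1 • f (polarCoord.symm p)) polarCoord.target := by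
  rw [← integrableOn_univ, ← integrableOn_congr_set_ae polarCoord_source_ae_eq_univ,
    ← polarCoord.symm_image_target_eq_source,
    integrableOn_image_iff_integrableOn_abs_det_fderiv_smul volume
      polarCoord.open_target.measurableSet
      (fun p _ => (hasFDerivAt_polarCoord_symm p).hasFDerivWithinAt) polarCoord.symm.injOn]
  refine integrableOn_congr_fun (fun p hp => ?_) polarCoord.open_target.measurableSet
  rw [det_fderivPolarCoordSymm, abs_of_pos hp.1]

theorem Complex.integrable_iff_integrableOn_polarCoord_symm (F : ℂ → G) :
    Integrable F ↔
      IntegrableOn (fun p => p.1 • F (Complex.polarCoord.symm p)) polarCoord.target := by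
  rw [← (Complex.volume_preserving_equiv_real_prod.symm).integrable_comp_emb
    Complex.measurableEquivRealProd.symm.measurableEmbedding,
    _root_.integrable_iff_integrableOn_polarCoord_symm]
  rfl

theorem Complex.polarCoord_symm_eq_circleMap (p : ℝ × ℝ) :
    Complex.polarCoord.symm p = circleMap 0 p.1 p.2 := by
  rw [Complex.polarCoord_symm_apply, circleMap_zero, Complex.exp_mul_I, ← Complex.ofReal_cos,
    ← Complex.ofReal_sin]

end Polar

section Annulus

variable {G : Type*} [NormedAddCommGroup G] [NormedSpace ℝ G] {F : ℂ → G} {r₁ r₂ : ℝ}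

theorem smul_indicator_annulus_polarCoord_symm {p : ℝ × ℝ} (hp : p ∈ polarCoord.target) :
    p.1 • (ball (0 : ℂ) r₂ \ ball 0 r₁).indicator F (Complex.polarCoord.symm p) =
      (Ico r₁ r₂ ×ˢ Ioo (-π) π).indicator (fun q => q.1 • F (circleMap 0 q.1 q.2)) p := by
  have hmem : Complex.polarCoord.symm p ∈ ball (0 : ℂ) r₂ \ ball 0 r₁ ↔
      p ∈ Ico r₁ r₂ ×ˢ Ioo (-π) π := by
    simp [abs_of_pos (show 0 < p.1 from hp.1), hp.2, and_comm]
  by_cases h : p ∈ Ico r₁ r₂ ×ˢ Ioo (-π) π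
  · rw [indicator_of_mem (hmem.2 h), indicator_of_mem h, Complex.polarCoord_symm_eq_circleMap]
  · rw [indicator_of_notMem (mt hmem.1 h), indicator_of_notMem h, smul_zero]

theorem integrableOn_annulus_iff_polar (h₁ : 0 < r₁) :
    IntegrableOn F (ball 0 r₂ \ ball 0 r₁) ↔
      IntegrableOn (fun p : ℝ × ℝ => p.1 • F (circleMap 0 p.1 p.2)) (Ico r₁ r₂ ×ˢ Ioo (-π) π) := by
  have hS : Ico r₁ r₂ ×ˢ Ioo (-π) π ⊆ polarCoord.target := fun p hp => ⟨h₁.trans_le hp.1.1, hp.2⟩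
  rw [← integrable_indicator_iff (measurableSet_ball.diff measurableSet_ball),
    Complex.integrable_iff_integrableOn_polarCoord_symm,
    integrableOn_congr_fun (fun p hp => smul_indicator_annulus_polarCoord_symm hp)
      polarCoord.open_target.measurableSet,
    integrableOn_indicator_iff (measurableSet_Ico.prod measurableSet_Ioo),
    inter_eq_left.2 hS]

theorem integral_annulus_eq_polar (h₁ : 0 < r₁) (hF : IntegrableOn F (ball 0 r₂ \ ball 0 r₁)) :
    ∫ z in ball 0 r₂ \ ball 0 r₁, F z =
      ∫ s in Ico r₁ r₂, ∫ θ in Ioo (-π) π, s • F (circleMap 0 s θ) := by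
  have hS : Ico r₁ r₂ ×ˢ Ioo (-π) π ⊆ polarCoord.target := fun p hp => ⟨h₁.trans_le hp.1.1, hp.2⟩
  rw [← integral_indicator (measurableSet_ball.diff measurableSet_ball),
    ← Complex.integral_comp_polarCoord_symm,
    setIntegral_congr_fun polarCoord.open_target.measurableSet
      (fun p hp => smul_indicator_annulus_polarCoord_symm hp),
    setIntegral_indicator (measurableSet_Ico.prod measurableSet_Ioo), inter_eq_right.2 hS,
    Measure.volume_eq_prod]
  exact setIntegral_prod (fun p : ℝ × ℝ => p.1 • F (circleMap 0 p.1 p.2))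
    ((integrableOn_annulus_iff_polar h₁).1 hF)

end Annulus

def curveDeriv (V : Type*) [NormedAddCommGroup V] [NormedSpace ℂ V] {M : Type*}
    [TopologicalSpace M] [ChartedSpace V M] (f : ℂ → M) (z : ℂ) : V :=
  mfderiv 𝓘(ℂ) 𝓘(ℂ, V) f z (1 : ℂ)

section LengthArea

variable {V : Type*} [NormedAddCommGroup V] [NormedSpace ℂ V]
  {M : Type*} [TopologicalSpace M] [ChartedSpace V M] {ω : M → V →L[ℝ] V →L[ℝ] ℝ}

theorem mfderiv_apply_eq_smul_curveDeriv (f : ℂ → M) (z c : ℂ) :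
    mfderiv 𝓘(ℂ) 𝓘(ℂ, V) f z c = c • curveDeriv V f z :=
  ContinuousLinearMap.apply_eq_smul_apply_one (V := V) _ c

theorem pdFull_eq (f : ℂ → M) (z : ℂ) :
    pdFull ω f z = ω (f z) (curveDeriv V f z) (Complex.I • curveDeriv V f z) :=
  congrArg _ (mfderiv_apply_eq_smul_curveDeriv f z Complex.I)

theorem pdFull_nonneg (hω_pos : ∀ x v, v ≠ 0 → 0 < ω x v (Complex.I • v)) (f : ℂ → M) (z : ℂ) :
    0 ≤ pdFull ω f z := by
  rw [pdFull_eq]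
  rcases eq_or_ne (curveDeriv V f z) 0 with h | h
  · simp [h]
  · exact (hω_pos _ _ h).le

theorem cArea_nonneg (hω_pos : ∀ x v, v ≠ 0 → 0 < ω x v (Complex.I • v)) (f : ℂ → M) (r : ℝ) :
    0 ≤ cArea ω f r :=
  setIntegral_nonneg measurableSet_ball fun z _ => pdFull_nonneg hω_pos f z

theorem cArea_mono (hω_pos : ∀ x v, v ≠ 0 → 0 < ω x v (Complex.I • v)) {f : ℂ → M}
    {r₁ r₂ : ℝ} (h₁₂ : r₁ ≤ r₂) (hint : IntegrableOn (pdFull ω f) (ball 0 r₂)) :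
    cArea ω f r₁ ≤ cArea ω f r₂ :=
  setIntegral_mono_set hint (ae_of_all _ (pdFull_nonneg hω_pos f))
    (ball_subset_ball h₁₂).eventuallyLE

theorem cLen_nonneg (f : ℂ → M) (r : ℝ) : 0 ≤ cLen ω f r :=
  intervalIntegral.integral_nonneg (by positivity) fun _ _ => sqrt_nonneg _

theorem cLen_eq_integral (hω_anti : ∀ x v w, ω x v w = -ω x w v) (f : ℂ → M) {r : ℝ}
    (hr : 0 ≤ r) : cLen ω f r = r * ∫ θ in -π..π, √(pdFull ω f (circleMap 0 r θ)) := by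
  have hper : Function.Periodic (fun θ => √(pdFull ω f (circleMap 0 r θ))) (2 * π) := fun θ => by
    simp only [periodic_circleMap 0 r θ]
  have hshift := hper.intervalIntegral_add_eq (-π) 0
  rw [show -π + 2 * π = π by ring, zero_add] at hshift
  rw [hshift, ← intervalIntegral.integral_const_mul]
  refine intervalIntegral.integral_congr fun θ _ => ?_
  have hcvec : cvec f r θ = (Complex.I * circleMap 0 r θ) • curveDeriv V f (circleMap 0 r θ) := by
    rw [cvec, ← circleMap_zero]
    exact mfderiv_apply_eq_smul_curveDeriv f _ _
  rw [← circleMap_zero, hcvec, apply_smul_I_smul_of_antisymm _ (hω_anti _), ← pdFull_eq, norm_mul,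
    Complex.norm_I, one_mul, norm_circleMap_zero, abs_of_nonneg hr, sqrt_mul (sq_nonneg r),
    sqrt_sq hr]

theorem cLen_sq_le (hω_anti : ∀ x v w, ω x v w = -ω x w v)
    (hω_pos : ∀ x v, v ≠ 0 → 0 < ω x v (Complex.I • v)) (f : ℂ → M) {s : ℝ} (hs : 0 ≤ s)
    (hint : IntegrableOn (fun θ => pdFull ω f (circleMap 0 s θ)) (Ioo (-π) π)) :
    cLen ω f s ^ 2 ≤ 2 * π * s * ∫ θ in Ioo (-π) π, s * pdFull ω f (circleMap 0 s θ) := by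
  have cauchy_schwarz := sq_integral_sqrt_le (μ := volume.restrict (Ioo (-π) π))
    (fun θ => pdFull_nonneg hω_pos f (circleMap 0 s θ)) hint
  rw [measureReal_restrict_apply_univ, volume_real_Ioo, sub_neg_eq_add,
    max_eq_left (by positivity), ← two_mul] at cauchy_schwarz
  rw [cLen_eq_integral hω_anti f hs, intervalIntegral.integral_of_le (by linarith [pi_pos]),
    integral_Ioc_eq_integral_Ioo, integral_const_mul, mul_pow]
  calc s ^ 2 * (∫ θ in Ioo (-π) π, √(pdFull ω f (circleMap 0 s θ))) ^ 2
      ≤ s ^ 2 * (2 * π * ∫ θ in Ioo (-π) π, pdFull ω f (circleMap 0 s θ)) := by gcongr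
    _ = _ := by ring

theorem cArea_add_le (hω_anti : ∀ x v w, ω x v w = -ω x w v)
    (hω_pos : ∀ x v, v ≠ 0 → 0 < ω x v (Complex.I • v)) (f : ℂ → M) {r₁ r₂ K : ℝ}
    (h₁ : 0 < r₁) (h₁₂ : r₁ ≤ r₂) (hK : 0 ≤ K) (hint : IntegrableOn (pdFull ω f) (ball 0 r₂))
    (hlen : ∀ s ∈ Ico r₁ r₂, K ≤ cLen ω f s) :
    cArea ω f r₁ + K ^ 2 / (2 * π) * (log r₂ - log r₁) ≤ cArea ω f r₂ := by
  have hannulus := hint.mono_set (sdiff_subset : ball (0 : ℂ) r₂ \ ball 0 r₁ ⊆ _)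
  have hpolar := (integrableOn_annulus_iff_polar h₁).1 hannulus
  simp only [smul_eq_mul] at hpolar
  rw [IntegrableOn, Measure.volume_eq_prod, ← Measure.prod_restrict] at hpolar
  have hbound : ∀ᵐ s ∂volume.restrict (Ico r₁ r₂),
      K ^ 2 / (2 * π) * s⁻¹ ≤ ∫ θ in Ioo (-π) π, s * pdFull ω f (circleMap 0 s θ) := by
    filter_upwards [hpolar.prod_right_ae, ae_restrict_mem measurableSet_Ico] with s hs_int hs
    have hs₀ : 0 < s := h₁.trans_le hs.1
    have hcircle := cLen_sq_le hω_anti hω_pos f hs₀.le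
      ((integrable_const_mul_iff (isUnit_iff_ne_zero.2 hs₀.ne') _).1 hs_int)
    have hK_sq : K ^ 2 ≤ cLen ω f s ^ 2 := pow_le_pow_left₀ hK (hlen s hs) 2
    rw [← div_eq_mul_inv, div_div, div_le_iff₀ (by positivity)]
    linarith
  have hinv_int : IntegrableOn (fun s : ℝ => K ^ 2 / (2 * π) * s⁻¹) (Ico r₁ r₂) :=
    (continuousOn_const.mul (continuousOn_inv₀.mono fun s hs => (h₁.trans_le hs.1).ne')
      |>.integrableOn_Icc).mono_set Ico_subset_Icc_self
  have hlog : ∫ s in Ico r₁ r₂, K ^ 2 / (2 * π) * s⁻¹ = K ^ 2 / (2 * π) * (log r₂ - log r₁) := by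
    rw [integral_const_mul, integral_Ico_eq_integral_Ioo, ← integral_Ioc_eq_integral_Ioo,
      ← intervalIntegral.integral_of_le h₁₂, integral_inv_of_pos h₁ (h₁.trans_le h₁₂),
      log_div (h₁.trans_le h₁₂).ne' h₁.ne']
  have hdiff : cArea ω f r₂ - cArea ω f r₁ =
      ∫ s in Ico r₁ r₂, ∫ θ in Ioo (-π) π, s * pdFull ω f (circleMap 0 s θ) := by
    rw [cArea, cArea, ← setIntegral_sdiff measurableSet_ball hint (ball_subset_ball h₁₂),
      integral_annulus_eq_polar h₁ hannulus]
    rfl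
  linarith [integral_mono_ae hinv_int hpolar.integral_prod_left hbound]

theorem exists_cLen_div_cArea_lt (hω_anti : ∀ x v w, ω x v w = -ω x w v)
    (hω_pos : ∀ x v, v ≠ 0 → 0 < ω x v (Complex.I • v)) (f : ℂ → M) {ε : ℝ} (hε : 0 < ε)
    (R : ℝ) : ∃ r ≥ R, cLen ω f r / cArea ω f r < ε := by
  by_contra! hratio
  set R₀ := max R 1
  have hR₀ : 0 < R₀ := lt_max_of_lt_right one_pos
  have harea : ∀ r ≥ R₀, 0 < cArea ω f r := fun r hr => by
    refine (cArea_nonneg hω_pos f r).lt_of_ne fun h => ?_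
    have := hratio r ((le_max_left _ _).trans hr)
    rw [← h, div_zero] at this
    linarith
  -- A nonzero area is not the junk value of a non-integrable density.
  have hint : ∀ r ≥ R₀, IntegrableOn (pdFull ω f) (ball 0 r) := fun r hr => by
    by_contra h
    exact (harea r hr).ne' (integral_undef h)
  have hlen : ∀ r ≥ R₀, ε * cArea ω f r ≤ cLen ω f r := fun r hr =>
    (le_div_iff₀ (harea r hr)).1 (hratio r ((le_max_left _ _).trans hr))
  refine false_of_forall_add_mul_sq_mul_sub_le (B := fun t => cArea ω f (exp t))
    (c := ε ^ 2 / (2 * π)) (t₀ := log R₀) (by positivity)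
    (by simpa only [exp_log hR₀] using harea R₀ le_rfl) fun t₁ t₂ ht₁ ht₁₂ => ?_
  have hr₁ : R₀ ≤ exp t₁ := by rwa [← exp_log hR₀, exp_le_exp]
  have hr₂ : R₀ ≤ exp t₂ := hr₁.trans (exp_le_exp.2 ht₁₂)
  have hgrowth := cArea_add_le hω_anti hω_pos f (exp_pos t₁) (exp_le_exp.2 ht₁₂)
    (mul_nonneg hε.le (cArea_nonneg hω_pos f _)) (hint _ hr₂) fun s hs =>
      (mul_le_mul_of_nonneg_left (cArea_mono hω_pos hs.1 (hint s (hr₁.trans hs.1))) hε.le).trans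
        (hlen s (hr₁.trans hs.1))
  rw [log_exp, log_exp] at hgrowth
  convert hgrowth using 2
  ring

end LengthArea

theorem ahlfors_lemma_general
    -- the hermitian area form on `X`
    (ω : X → E →L[ℝ] E →L[ℝ] ℝ)
    (hω_anti : ∀ x v w, ω x v w = - ω x w v)
    (hω_pos : ∀ (x : X) (v : E), v ≠ 0 → 0 < ω x v (Complex.I • v))
    -- an entire curve
    (f : ℂ → X) :
    ∃ r : ℕ → ℝ, (∀ n, 0 < r n) ∧ Tendsto r atTop atTop ∧
      Tendsto (fun n => cLen ω f (r n) / cArea ω f (r n)) atTop (𝓝 0) :=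
  exists_seq_tendsto_atTop_of_forall_exists_lt
    (fun r => div_nonneg (cLen_nonneg f r) (cArea_nonneg hω_pos f r))
    fun _ hε R => exists_cLen_div_cArea_lt hω_anti hω_pos f hε R

/-- **Ahlfors lemma.** For every entire curve `f : ℂ → X` in a compact hermitian complex
manifold there are radii `r n → +∞` along which the ratio length/area of the restricted
discs tends to `0` (condition (A)). -/
theorem ahlfors_lemma
    [IsManifold 𝓘(ℂ, E) (⊤ : ℕ∞) X] [CompactSpace X]
    -- the hermitian area form on `X`
    (ω : X → E →L[ℝ] E →L[ℝ] ℝ) (hω_cont : Continuous ω)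
    (hω_anti : ∀ x v w, ω x v w = - ω x w v)
    (hω_J : ∀ (x : X) (v w : E), ω x (Complex.I • v) (Complex.I • w) = ω x v w)
    (hω_pos : ∀ (x : X) (v : E), v ≠ 0 → 0 < ω x v (Complex.I • v))
    -- an entire curve
    (f : ℂ → X) (hf : MDifferentiable 𝓘(ℂ) 𝓘(ℂ, E) f) (hnc : ∃ z w : ℂ, f z ≠ f w) :
    ∃ r : ℕ → ℝ, (∀ n, 0 < r n) ∧ Tendsto r atTop atTop ∧
      Tendsto (fun n => cLen ω f (r n) / cArea ω f (r n)) atTop (𝓝 0) :=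
  ahlfors_lemma_general ω hω_anti hω_pos f
end
end
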